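/- arXiv:1309.4245 — 4 statements merged into one kernel-verified Lean document; each statement's English description precedes it below -/
import Mathlib

section
/- (Fractional Gronwall inequality) Let α > 0, L ≥ 0, δ₀ ≥ 0, and let δ : [a, T] → [0, ∞) be continuous and satisfy δ(t) ≤ δ₀ + (L/Γ(α)) ∫_a^t (t - s)^{α-1} δ(s) ds for all t ∈ [a, T]. Then δ(t) ≤ δ₀ · E_α(L (t - a)^α) for all t ∈ [a, T], where E_α(z) = Σ_{k=0}^∞ z^k/Γ(αk + 1) is the Mittag-Leffler function. -/
open MeasureTheory intervalIntegral Set Finset Real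

lemma realBeta {u v : ℝ} (hu : 0 < u) (hv : 0 < v) :
    ∫ x in (0:ℝ)..1, x ^ (u - 1) * (1 - x) ^ (v - 1)
      = Real.Gamma u * Real.Gamma v / Real.Gamma (u + v) := by
  have h := Complex.Gamma_mul_Gamma_eq_betaIntegral (s := (u:ℂ)) (t := (v:ℂ))
    (by simpa using hu) (by simpa using hv)
  have hB : Complex.betaIntegral (u:ℂ) (v:ℂ)
      = ((∫ x in (0:ℝ)..1, x ^ (u - 1) * (1 - x) ^ (v - 1) : ℝ) : ℂ) := by
    rw [Complex.betaIntegral, ← intervalIntegral.integral_ofReal]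
    apply intervalIntegral.integral_congr
    intro x hx
    rw [Set.uIcc_of_le (by norm_num : (0:ℝ) ≤ 1)] at hx
    simp only []
    rw [Complex.ofReal_mul, Complex.ofReal_cpow hx.1, Complex.ofReal_cpow (by linarith [hx.2] : (0:ℝ) ≤ 1 - x)]
    push_cast
    ring
  rw [hB, ← Complex.ofReal_add, Complex.Gamma_ofReal, Complex.Gamma_ofReal, Complex.Gamma_ofReal,
    ← Complex.ofReal_mul, ← Complex.ofReal_mul] at h
  have := Complex.ofReal_injective h
  have hg : Real.Gamma (u + v) ≠ 0 := (Real.Gamma_pos_of_pos (by linarith)).ne'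
  field_simp
  linarith [this]


lemma betaSub {u v a t : ℝ} (hu : 0 < u) (hv : 0 < v) (huv : 0 < u + v - 1) (hat : a ≤ t) :
    ∫ s in a..t, (t - s) ^ (u - 1) * (s - a) ^ (v - 1)
      = Real.Gamma u * Real.Gamma v / Real.Gamma (u + v) * (t - a) ^ (u + v - 1) := by
  rcases eq_or_lt_of_le hat with h | h
  · subst h
    rw [intervalIntegral.integral_same, sub_self, Real.zero_rpow huv.ne', mul_zero]
  · set c := t - a with hc
    have hcpos : 0 < c := by simp [hc]; linarith
    have key : (∫ x in (0:ℝ)..1, (t - (c * x + a)) ^ (u - 1) * ((c * x + a) - a) ^ (v - 1))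
        = c⁻¹ • ∫ s in a..t, (t - s) ^ (u - 1) * (s - a) ^ (v - 1) := by
      have := intervalIntegral.integral_comp_mul_add
        (f := fun s => (t - s) ^ (u - 1) * (s - a) ^ (v - 1)) (a := (0:ℝ)) (b := 1)
        (c := c) hcpos.ne' a
      simpa [hc] using this
    have key2 : (∫ x in (0:ℝ)..1, (t - (c * x + a)) ^ (u - 1) * ((c * x + a) - a) ^ (v - 1))
        = c ^ (u - 1) * c ^ (v - 1) * ∫ x in (0:ℝ)..1, x ^ (v - 1) * (1 - x) ^ (u - 1) := by
      rw [← intervalIntegral.integral_const_mul]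
      apply intervalIntegral.integral_congr
      intro x hx
      simp only []
      rw [Set.uIcc_of_le (by norm_num : (0:ℝ) ≤ 1)] at hx
      have h1 : t - (c * x + a) = c * (1 - x) := by rw [hc]; ring
      have h2 : c * x + a - a = c * x := by ring
      rw [h1, h2, Real.mul_rpow hcpos.le (by linarith [hx.2]),
        Real.mul_rpow hcpos.le hx.1]
      ring
    have hB := realBeta hv hu
    rw [key2, hB] at key
    have : ∫ s in a..t, (t - s) ^ (u - 1) * (s - a) ^ (v - 1)
        = c * (c ^ (u - 1) * c ^ (v - 1) * (Real.Gamma v * Real.Gamma u / Real.Gamma (v + u))) := by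
      simp only [smul_eq_mul] at key
      field_simp at key ⊢
      linarith [key]
    rw [this]
    have : c * (c ^ (u - 1) * c ^ (v - 1)) = c ^ (u + v - 1) := by
      rw [show u + v - 1 = 1 + (u - 1) + (v - 1) by ring, Real.rpow_add hcpos,
        Real.rpow_add hcpos, Real.rpow_one]
      ring
    rw [add_comm v u, ← this]
    ring


lemma gamma_ge_half {y : ℝ} (hy : 1 ≤ y) : 1/2 ≤ Real.Gamma y := by
  rcases le_or_gt 2 y with h | h
  · have := Real.Gamma_strictMonoOn_Ici.monotoneOn (by norm_num : (2:ℝ) ∈ Set.Ici 2)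
      (h : y ∈ Set.Ici 2) h
    rw [Real.Gamma_two] at this
    linarith
  · have hy1 : Real.Gamma (y + 1) = y * Real.Gamma y := Real.Gamma_add_one (by linarith)
    have h2 : (1:ℝ) ≤ Real.Gamma (y + 1) := by
      have := Real.Gamma_strictMonoOn_Ici.monotoneOn (by norm_num : (2:ℝ) ∈ Set.Ici 2)
        (by simp; linarith : y + 1 ∈ Set.Ici 2) (by linarith)
      rw [Real.Gamma_two] at this
      linarith
    nlinarith [Real.Gamma_pos_of_pos (show (0:ℝ) < y by linarith)]

lemma count_sum (F : ℕ → ℝ) (m : ℕ) (hm : 1 ≤ m) (N : ℕ) :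
    ∑ n ∈ Finset.range (m * N), F (n / m) = m * ∑ q ∈ Finset.range N, F q := by
  induction N with
  | zero => simp
  | succ N ih =>
    rw [Finset.sum_range_succ, show m * (N + 1) = m * N + m by ring,
      ← Finset.sum_range_add_sum_Ico _ (Nat.le_add_right _ _), ih]
    have key : ∑ n ∈ Finset.Ico (m * N) (m * N + m), F (n / m) = m * F N := by
      have h1 : ∀ n ∈ Finset.Ico (m * N) (m * N + m), F (n / m) = F N := by
        intro n hn
        rw [Finset.mem_Ico] at hn
        refine congrArg F (Nat.div_eq_of_lt_le ?_ ?_)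
        · rw [Nat.mul_comm]; exact hn.1
        · rw [Nat.succ_mul, Nat.mul_comm]; exact hn.2
      rw [Finset.sum_congr rfl h1, Finset.sum_const, Nat.card_Ico]
      simp [nsmul_eq_mul]
    rw [key]; ring

lemma ml_summable {α : ℝ} (hα : 0 < α) {x : ℝ} (hx : 0 ≤ x) :
    Summable (fun n : ℕ => x ^ n / Real.Gamma (α * n + 1)) := by
  set m : ℕ := ⌈1/α⌉₊ with hm
  have hm1 : 1 ≤ m := Nat.one_le_iff_ne_zero.mpr (by
    simp [hm, Nat.ceil_eq_zero, not_le]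
    positivity)
  have hαm : 1 ≤ α * m := by
    have h := Nat.le_ceil (1/α)
    calc (1:ℝ) = α * (1/α) := by field_simp
    _ ≤ α * m := by apply mul_le_mul_of_nonneg_left h hα.le
  set y := x ^ m with hy
  set C : ℝ := 2 * (max 1 x) ^ m with hC
  have hmax1 : (1:ℝ) ≤ max 1 x := le_max_left _ _
  have hbound : ∀ n : ℕ, x ^ n / Real.Gamma (α * n + 1)
      ≤ C * (y ^ (n / m) / ((n / m).factorial : ℝ)) := by
    intro n
    set q : ℕ := n / m with hq
    have hΓpos : 0 < Real.Gamma (α * n + 1) := Real.Gamma_pos_of_pos (by positivity)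
    have hdm : q * m + n % m = n := by rw [hq, Nat.mul_comm]; exact Nat.div_add_mod n m
    have hmod : n % m < m := Nat.mod_lt _ (by omega)
    have hxn : x ^ n ≤ (max 1 x) ^ m * y ^ q := by
      calc x ^ n = (x ^ m) ^ q * x ^ (n % m) := by
            rw [← pow_mul, ← pow_add, Nat.mul_comm m q, hdm]
      _ ≤ (x ^ m) ^ q * (max 1 x) ^ m := by
            apply mul_le_mul_of_nonneg_left _ (by positivity)
            calc x ^ (n % m) ≤ (max 1 x) ^ (n % m) :=
                  pow_le_pow_left₀ hx (le_max_right _ _) _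
            _ ≤ (max 1 x) ^ m := pow_le_pow_right₀ hmax1 hmod.le
      _ = (max 1 x) ^ m * y ^ q := by rw [hy]; ring
    rcases Nat.eq_zero_or_pos q with hq0 | hqpos
    · have hΓ : (1:ℝ)/2 ≤ Real.Gamma (α * n + 1) :=
        gamma_ge_half (le_add_of_nonneg_left (by positivity))
      rw [hq0]
      simp only [pow_zero, Nat.factorial_zero, Nat.cast_one]
      rw [div_le_iff₀ hΓpos]
      calc x ^ n ≤ (max 1 x) ^ m * y ^ 0 := by rw [← hq0]; exact hxn
      _ = (max 1 x) ^ m := by simp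
      _ ≤ C * (1 / 1) * Real.Gamma (α * n + 1) := by
          rw [hC]
          have he : (2:ℝ) * (max 1 x) ^ m * (1/1) * Real.Gamma (α * n + 1)
              = (max 1 x) ^ m * (2 * Real.Gamma (α * n + 1)) := by ring
          rw [he]
          nlinarith [pow_pos (lt_of_lt_of_le one_pos hmax1) m]
    · have hfact : (q.factorial : ℝ) ≤ Real.Gamma (α * n + 1) := by
        have hmq : q * m ≤ n := by rw [hq]; exact Nat.div_mul_le_self n m
        have hmqR : (q:ℝ) * m ≤ n := by exact_mod_cast hmq
        have h1 : (q:ℝ) + 1 ≤ α * n + 1 := by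
          have : (q:ℝ) ≤ α * n := by
            calc (q:ℝ) ≤ (α * m) * q := le_mul_of_one_le_left (by positivity) hαm
            _ = α * ((q:ℝ) * m) := by ring
            _ ≤ α * n := mul_le_mul_of_nonneg_left hmqR hα.le
          linarith
        have h2 : ((q:ℝ) + 1) ∈ Set.Ici (2:ℝ) := by
          rw [Set.mem_Ici]
          have : (1:ℝ) ≤ q := by exact_mod_cast hqpos
          linarith
        have hmono := Real.Gamma_strictMonoOn_Ici.monotoneOn h2
          (Set.mem_Ici.mpr (le_trans (Set.mem_Ici.mp h2) h1)) h1
        rwa [Real.Gamma_nat_eq_factorial] at hmono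
      calc x ^ n / Real.Gamma (α * n + 1) ≤ ((max 1 x) ^ m * y ^ q) / (q.factorial : ℝ) :=
            div_le_div₀ (by positivity) hxn (by positivity) hfact
      _ ≤ C * (y ^ q / (q.factorial : ℝ)) := by
            rw [hC, div_le_iff₀ (by positivity : (0:ℝ) < (q.factorial : ℝ))]
            have he : 2 * (max 1 x) ^ m * (y ^ q / (q.factorial:ℝ)) * (q.factorial:ℝ)
                = 2 * ((max 1 x) ^ m * y ^ q) := by
              field_simp
            rw [he]
            nlinarith [pow_nonneg (le_trans zero_le_one hmax1) m,
              pow_nonneg (pow_nonneg hx m) q]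
  apply Summable.of_nonneg_of_le (fun n => by positivity) hbound
  apply Summable.mul_left
  apply summable_of_sum_range_le (c := m * Real.exp y) (fun n => by positivity)
  intro N
  calc ∑ n ∈ Finset.range N, y ^ (n / m) / ((n / m).factorial : ℝ)
      ≤ ∑ n ∈ Finset.range (m * N), y ^ (n / m) / ((n / m).factorial : ℝ) := by
        apply Finset.sum_le_sum_of_subset_of_nonneg
        · exact Finset.range_subset_range.mpr (Nat.le_mul_of_pos_left N (by omega))
        · intros; positivity
  _ = m * ∑ q ∈ Finset.range N, y ^ q / (q.factorial : ℝ) :=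
        count_sum (fun q => y ^ q / (q.factorial : ℝ)) m hm1 N
  _ ≤ m * Real.exp y := by
        apply mul_le_mul_of_nonneg_left (Real.sum_le_exp_of_nonneg (by positivity) N)
          (by positivity)


noncomputable def mittagLeffler (α z : ℝ) : ℝ := ∑' k : ℕ, z ^ k / Real.Gamma (α * k + 1)

lemma integ_ker {α : ℝ} (hα : 0 < α) (a t : ℝ) (g : ℝ → ℝ)
    (hg : ContinuousOn g (Set.uIcc a t)) :
    IntervalIntegrable (fun s => (t - s) ^ (α - 1) * g s) volume a t := by
  have h1 : IntervalIntegrable (fun x : ℝ => x ^ (α - 1)) volume (t - a) (t - t) :=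
    intervalIntegral.intervalIntegrable_rpow' (by linarith)
  have h2 := h1.comp_sub_left t
  simp only [sub_sub_cancel] at h2
  exact h2.mul_continuousOn hg

theorem stmt10 (α L δ₀ a T : ℝ) (δ : ℝ → ℝ)
    (hα : 0 < α) (hL : 0 ≤ L) (hδ₀ : 0 ≤ δ₀) (haT : a < T)
    (hcont : ContinuousOn δ (Set.Icc a T))
    (hnonneg : ∀ t ∈ Set.Icc a T, 0 ≤ δ t)
    (hineq : ∀ t ∈ Set.Icc a T,
      δ t ≤ δ₀ + (L / Real.Gamma α) * ∫ s in a..t, (t - s) ^ (α - 1) * δ s) :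
    ∀ t ∈ Set.Icc a T, δ t ≤ δ₀ * mittagLeffler α (L * (t - a) ^ α) := by
  have hΓα : 0 < Real.Gamma α := Real.Gamma_pos_of_pos hα
  -- bound for δ
  obtain ⟨M₀, hM₀⟩ := (isCompact_Icc (a := a) (b := T)).exists_bound_of_continuousOn hcont
  set M : ℝ := max M₀ 0 with hM
  have hM0 : 0 ≤ M := le_max_right _ _
  have hMb : ∀ t ∈ Set.Icc a T, δ t ≤ M := fun t ht =>
    le_trans (le_trans (le_abs_self _) (hM₀ t ht)) (le_max_left _ _)
  -- the general term
  set c : ℕ → ℝ → ℝ := fun k t => L ^ k * (t - a) ^ (α * k) / Real.Gamma (α * k + 1) with hc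
  have hΓk : ∀ k : ℕ, 0 < Real.Gamma (α * k + 1) := fun k =>
    Real.Gamma_pos_of_pos (by positivity)
  have hcnonneg : ∀ k : ℕ, ∀ t, a ≤ t → 0 ≤ c k t := by
    intro k t hat
    rw [hc]
    have : 0 ≤ (t - a) ^ (α * k) := Real.rpow_nonneg (by linarith) _
    positivity
  have hrpcont : ∀ (β : ℝ) (t : ℝ), 0 ≤ β →
      ContinuousOn (fun s : ℝ => (s - a) ^ β) (Set.uIcc a t) :=
    fun β t hβ => (continuousOn_id.sub continuousOn_const).rpow_const
      (fun x _ => Or.inr hβ)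
  have hccont : ∀ (k : ℕ) (t : ℝ), ContinuousOn (c k) (Set.uIcc a t) := by
    intro k t
    rw [hc]
    simp only []
    exact (((hrpcont (α * k) t (by positivity)).const_smul (L ^ k)).div_const _)
  -- Beta computation
  have hJ : ∀ (k : ℕ) (t : ℝ), a ≤ t →
      ∫ s in a..t, (t - s) ^ (α - 1) * (s - a) ^ (α * k)
        = Real.Gamma α * Real.Gamma (α * k + 1) / Real.Gamma (α * ((k:ℝ) + 1) + 1)
            * (t - a) ^ (α * ((k:ℝ) + 1)) := by
    intro k t hat
    have hb := betaSub (u := α) (v := α * k + 1) hα (by positivity)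
      (by push_cast; nlinarith [mul_nonneg hα.le (Nat.cast_nonneg k)]) hat
    have e1 : α * (k:ℝ) + 1 - 1 = α * k := by ring
    have e2 : α + (α * (k:ℝ) + 1) = α * ((k:ℝ) + 1) + 1 := by ring
    have e3 : α + (α * (k:ℝ) + 1) - 1 = α * ((k:ℝ) + 1) := by ring
    rw [e1, e3, e2] at hb
    exact hb
  -- main induction
  have key : ∀ n : ℕ, ∀ t ∈ Set.Icc a T,
      δ t ≤ δ₀ * ∑ k ∈ Finset.range n, c k t + M * c n t := by
    intro n
    induction n with
    | zero =>
      intro t ht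
      have : c 0 t = 1 := by
        rw [hc]
        simp [Real.Gamma_one]
      rw [this]
      simp only [Finset.range_zero, Finset.sum_empty, mul_zero, zero_add, mul_one]
      exact hMb t ht
    | succ n ih =>
      intro t ht
      obtain ⟨hat, htT⟩ := ht
      have hsub : Set.uIcc a t ⊆ Set.Icc a T := by
        rw [Set.uIcc_of_le hat]
        exact Set.Icc_subset_Icc le_rfl htT
      -- integrand bound
      have hint1 : IntervalIntegrable (fun s => (t - s) ^ (α - 1) * δ s) volume a t :=
        integ_ker hα a t δ (hcont.mono hsub)
      have hRHScont : ContinuousOn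
          (fun s => δ₀ * ∑ k ∈ Finset.range n, c k s + M * c n s) (Set.uIcc a t) := by
        apply ContinuousOn.add
        · exact (continuousOn_finset_sum _ (fun k _ => hccont k t)).const_smul δ₀
        · exact (hccont n t).const_smul M
      have hint2 : IntervalIntegrable
          (fun s => (t - s) ^ (α - 1) * (δ₀ * ∑ k ∈ Finset.range n, c k s + M * c n s))
          volume a t := integ_ker hα a t _ hRHScont
      have mono1 : (∫ s in a..t, (t - s) ^ (α - 1) * δ s)
          ≤ ∫ s in a..t, (t - s) ^ (α - 1) * (δ₀ * ∑ k ∈ Finset.range n, c k s + M * c n s) := by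
        apply intervalIntegral.integral_mono_on hat hint1 hint2
        intro s hs
        have h1 : 0 ≤ (t - s) ^ (α - 1) := Real.rpow_nonneg (by linarith [hs.2]) _
        exact mul_le_mul_of_nonneg_left (ih s ⟨hs.1, le_trans hs.2 htT⟩) h1
      -- integrability of pieces
      have hintk : ∀ k : ℕ, IntervalIntegrable
          (fun s => (t - s) ^ (α - 1) * (s - a) ^ (α * k)) volume a t :=
        fun k => integ_ker hα a t _ (hrpcont (α * k) t (by positivity))
      -- compute the RHS integral
      have split : (∫ s in a..t, (t - s) ^ (α - 1) * (δ₀ * ∑ k ∈ Finset.range n, c k s + M * c n s))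
          = δ₀ * ∑ k ∈ Finset.range n, ((L ^ k / Real.Gamma (α * k + 1)) *
              (∫ s in a..t, (t - s) ^ (α - 1) * (s - a) ^ (α * k)))
            + M * (L ^ n / Real.Gamma (α * n + 1)) *
              (∫ s in a..t, (t - s) ^ (α - 1) * (s - a) ^ (α * n)) := by
        have e : ∀ s : ℝ, (t - s) ^ (α - 1) * (δ₀ * ∑ k ∈ Finset.range n, c k s + M * c n s)
            = (∑ k ∈ Finset.range n, δ₀ * (L ^ k / Real.Gamma (α * k + 1)) *
                ((t - s) ^ (α - 1) * (s - a) ^ (α * k)))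
              + M * (L ^ n / Real.Gamma (α * n + 1)) *
                ((t - s) ^ (α - 1) * (s - a) ^ (α * n)) := by
          intro s
          rw [hc]
          simp only [Finset.mul_sum]
          rw [mul_add, Finset.mul_sum]
          congr 1
          · apply Finset.sum_congr rfl
            intro k _
            ring
          · ring
        simp only [e]
        have hintS : IntervalIntegrable (fun s => ∑ k ∈ Finset.range n,
            δ₀ * (L ^ k / Real.Gamma (α * k + 1)) * ((t - s) ^ (α - 1) * (s - a) ^ (α * k)))
            volume a t := by
          have := IntervalIntegrable.sum (Finset.range n) (μ := volume) (a := a) (b := t)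
            (f := fun k => fun s => δ₀ * (L ^ k / Real.Gamma (α * k + 1)) *
              ((t - s) ^ (α - 1) * (s - a) ^ (α * k)))
            (fun k _ => ((hintk k).const_mul _))
          have heq : (fun s => ∑ k ∈ Finset.range n,
              δ₀ * (L ^ k / Real.Gamma (α * k + 1)) * ((t - s) ^ (α - 1) * (s - a) ^ (α * k)))
              = (∑ k ∈ Finset.range n, fun s => δ₀ * (L ^ k / Real.Gamma (α * k + 1)) *
                  ((t - s) ^ (α - 1) * (s - a) ^ (α * k))) := by
            funext s
            rw [Finset.sum_apply]
          rw [heq]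
          exact this
        rw [intervalIntegral.integral_add hintS ((hintk n).const_mul _)]
        rw [intervalIntegral.integral_finset_sum (fun k _ => ((hintk k).const_mul _))]
        simp only [intervalIntegral.integral_const_mul]
        rw [Finset.mul_sum]
        congr 1
        apply Finset.sum_congr rfl
        intro k _
        ring
      -- apply Beta
      have compute : δ₀ + (L / Real.Gamma α) *
          (∫ s in a..t, (t - s) ^ (α - 1) * (δ₀ * ∑ k ∈ Finset.range n, c k s + M * c n s))
          = δ₀ * ∑ k ∈ Finset.range (n + 1), c k t + M * c (n + 1) t := by
        rw [split]
        have hterm : ∀ k : ℕ, (L / Real.Gamma α) * ((L ^ k / Real.Gamma (α * k + 1)) *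
            (∫ s in a..t, (t - s) ^ (α - 1) * (s - a) ^ (α * k))) = c (k + 1) t := by
          intro k
          rw [hJ k t hat, hc]
          simp only []
          push_cast
          field_simp
          ring
        rw [Finset.sum_range_succ' (fun k => c k t) n]
        have hc0 : c 0 t = 1 := by rw [hc]; simp [Real.Gamma_one]
        have e1 : ∑ k ∈ Finset.range n, c (k + 1) t
            = ∑ k ∈ Finset.range n, (L / Real.Gamma α) * ((L ^ k / Real.Gamma (α * k + 1)) *
                (∫ s in a..t, (t - s) ^ (α - 1) * (s - a) ^ (α * k))) :=
          Finset.sum_congr rfl (fun k _ => (hterm k).symm)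
        rw [hc0, e1, ← hterm n, ← Finset.mul_sum]
        ring
      calc δ t ≤ δ₀ + (L / Real.Gamma α) * ∫ s in a..t, (t - s) ^ (α - 1) * δ s :=
            hineq t ⟨hat, htT⟩
      _ ≤ δ₀ + (L / Real.Gamma α) *
            ∫ s in a..t, (t - s) ^ (α - 1) * (δ₀ * ∑ k ∈ Finset.range n, c k s + M * c n s) := by
            have : 0 ≤ L / Real.Gamma α := by positivity
            nlinarith [mono1]
      _ = δ₀ * ∑ k ∈ Finset.range (n + 1), c k t + M * c (n + 1) t := compute
  -- conclusion
  intro t ht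
  obtain ⟨hat, htT⟩ := ht
  set x : ℝ := L * (t - a) ^ α with hx
  have hx0 : 0 ≤ x := by
    have : 0 ≤ (t - a) ^ α := Real.rpow_nonneg (by linarith) _
    positivity
  have hck : ∀ k : ℕ, c k t = x ^ k / Real.Gamma (α * k + 1) := by
    intro k
    rw [hc, hx]
    simp only []
    rw [mul_pow, ← Real.rpow_natCast ((t - a) ^ α) k, ← Real.rpow_mul (by linarith : (0:ℝ) ≤ t - a)]
  have hsummable := ml_summable hα hx0
  have hpartial : ∀ n : ℕ, ∑ k ∈ Finset.range n, c k t ≤ mittagLeffler α x := by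
    intro n
    rw [mittagLeffler]
    simp only [hck]
    exact Summable.sum_le_tsum (Finset.range n) (fun i _ => by positivity) hsummable
  have hlim : Filter.Tendsto (fun n : ℕ => δ₀ * mittagLeffler α x + M * c n t)
      Filter.atTop (nhds (δ₀ * mittagLeffler α x)) := by
    have h1 : Filter.Tendsto (fun n : ℕ => c n t) Filter.atTop (nhds 0) := by
      simp only [hck]
      exact hsummable.tendsto_atTop_zero
    have := (h1.const_mul M).const_add (δ₀ * mittagLeffler α x)
    simpa using this
  apply ge_of_tendsto hlim
  filter_upwards with n
  calc δ t ≤ δ₀ * ∑ k ∈ Finset.range n, c k t + M * c n t := key n t ⟨hat, htT⟩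
  _ ≤ δ₀ * mittagLeffler α x + M * c n t := by
      have := hpartial n
      nlinarith [this]
end

section
/- Let α > 1, a ≤ ã < T, let f be continuous, bounded by M, and L-Lipschitz in the second variable, and let m = ⌈α⌉. Let y, ỹ solve the Volterra equations y(t) = Σ_{k=0}^{m-1} (y_k/k!)(t - a)^k + (1/Γ(α)) ∫_a^t (t-s)^{α-1} f(s,y(s)) ds on [a,T] and ỹ(t) = Σ_{k=0}^{m-1} (y_k/k!)(t - ã)^k + (1/Γ(α)) ∫_{ã}^t (t-s)^{α-1} f(s,ỹ(s)) ds on [ã,T]. Then there is a constant C (depending on α, M, the y_k, T - a, and L but not on ã - a) such that sup_{t ∈ [ã,T]} |y(t) - ỹ(t)| ≤ C |a - ã|. -/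
private lemma stmt12_pow_aux (R x y : ℝ) (hy0 : 0 ≤ y) (hyx : y ≤ x) (hxR : x ≤ R) (k : ℕ) :
    |x ^ k - y ^ k| ≤ (k : ℝ) * R ^ (k - 1) * (x - y) := by
  have hx0 : 0 ≤ x := hy0.trans hyx
  have hR0 : 0 ≤ R := hx0.trans hxR
  have h1 : 0 ≤ x ^ k - y ^ k := sub_nonneg.2 (pow_le_pow_left₀ hy0 hyx k)
  rw [abs_of_nonneg h1, ← geom_sum₂_mul]
  have hsum : (∑ i ∈ Finset.range k, x ^ i * y ^ (k - 1 - i)) ≤ (k : ℝ) * R ^ (k - 1) := by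
    calc (∑ i ∈ Finset.range k, x ^ i * y ^ (k - 1 - i))
        ≤ ∑ _i ∈ Finset.range k, R ^ (k - 1) := by
          refine Finset.sum_le_sum fun i hi => ?_
          have hik := Finset.mem_range.1 hi
          calc x ^ i * y ^ (k - 1 - i) ≤ R ^ i * R ^ (k - 1 - i) :=
                mul_le_mul (pow_le_pow_left₀ hx0 hxR i)
                  (pow_le_pow_left₀ hy0 (hyx.trans hxR) _) (pow_nonneg hy0 _) (pow_nonneg hR0 _)
            _ = R ^ (k - 1) := by rw [← pow_add]; congr 1; omega
      _ = (k : ℝ) * R ^ (k - 1) := by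
          rw [Finset.sum_const, Finset.card_range, nsmul_eq_mul]
  exact mul_le_mul_of_nonneg_right hsum (sub_nonneg.2 hyx)

theorem stmt12 (α a T M L : ℝ) (yk : ℕ → ℝ) (f : ℝ → ℝ → ℝ)
    (hα : 1 < α) (haT : a < T)
    (hfcont : ContinuousOn (fun p : ℝ × ℝ => f p.1 p.2) (Set.Icc a T ×ˢ Set.univ))
    (hfbdd : ∀ t ∈ Set.Icc a T, ∀ x : ℝ, |f t x| ≤ M)
    (hflip : ∀ t ∈ Set.Icc a T, ∀ x₁ x₂ : ℝ, |f t x₁ - f t x₂| ≤ L * |x₁ - x₂|) :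
    ∃ C : ℝ, ∀ a' : ℝ, a ≤ a' → a' < T → ∀ y y' : ℝ → ℝ,
      ContinuousOn y (Set.Icc a T) → ContinuousOn y' (Set.Icc a' T) →
      (∀ t ∈ Set.Icc a T,
        y t = (∑ k ∈ Finset.range ⌈α⌉₊, yk k / (Nat.factorial k) * (t - a) ^ k)
          + (1 / Real.Gamma α) * ∫ s in a..t, (t - s) ^ (α - 1) * f s (y s)) →
      (∀ t ∈ Set.Icc a' T,
        y' t = (∑ k ∈ Finset.range ⌈α⌉₊, yk k / (Nat.factorial k) * (t - a') ^ k)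
          + (1 / Real.Gamma α) * ∫ s in a'..t, (t - s) ^ (α - 1) * f s (y' s)) →
      ∀ t ∈ Set.Icc a' T, |y t - y' t| ≤ C * |a - a'| := by
  have hα0 : (0:ℝ) < α := lt_trans one_pos hα
  have hα1 : 0 < α - 1 := by linarith
  have hΓ : 0 < Real.Gamma α := Real.Gamma_pos_of_pos hα0
  set D : ℝ := 1 / Real.Gamma α with hDdef
  have hD : 0 < D := by positivity
  set R : ℝ := T - a with hRdef
  have hR : 0 < R := by simp [hRdef]; linarith
  have hRa : 0 ≤ R ^ (α - 1) := Real.rpow_nonneg hR.le _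
  have hM : 0 ≤ M := (abs_nonneg _).trans (hfbdd a ⟨le_refl a, haT.le⟩ 0)
  have hL : 0 ≤ L := by
    have h := hflip a ⟨le_refl a, haT.le⟩ 1 0
    have h2 : (0:ℝ) ≤ L * |(1:ℝ) - 0| := (abs_nonneg _).trans h
    simpa using h2
  set S : ℝ := ∑ k ∈ Finset.range ⌈α⌉₊, |yk k| / (Nat.factorial k : ℝ) * ((k : ℝ) * R ^ (k - 1))
    with hSdef
  have hS : 0 ≤ S := by
    refine Finset.sum_nonneg fun k _ => ?_
    have : (0:ℝ) ≤ R ^ (k - 1) := pow_nonneg hR.le _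
    positivity
  set Kc : ℝ := L * R ^ (α - 1) * D with hKcdef
  have hKc : 0 ≤ Kc := by positivity
  set C₁ : ℝ := S + M * R ^ (α - 1) * D with hC₁def
  have hC₁ : 0 ≤ C₁ := by positivity
  refine ⟨C₁ * Real.exp (Kc * R), ?_⟩
  intro a' ha' ha'T y y' hycont hy'cont hy hy'
  have haa' : 0 ≤ a' - a := sub_nonneg.2 ha'
  have hsub1 : Set.Icc a' T ⊆ Set.Icc a T := Set.Icc_subset_Icc ha' le_rfl
  set ε : ℝ := C₁ * (a' - a) with hεdef
  have hε : 0 ≤ ε := mul_nonneg hC₁ haa'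
  set g : ℝ → ℝ := fun s => |y s - y' s| with hgdef
  have hgcont : ContinuousOn g (Set.Icc a' T) := ((hycont.mono hsub1).sub hy'cont).abs
  set gE : ℝ → ℝ := Set.IccExtend ha'T.le ((Set.Icc a' T).restrict g) with hgEdef
  have hgE : Continuous gE := hgcont.restrict.Icc_extend'
  have hgEeq : ∀ s ∈ Set.Icc a' T, gE s = g s := fun s hs => Set.IccExtend_of_mem _ _ hs
  set G : ℝ → ℝ := fun u => ∫ s in a'..u, gE s with hGdef
  have hGderiv : ∀ u : ℝ, HasDerivAt G (gE u) u := fun u =>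
    intervalIntegral.integral_hasDerivAt_right (hgE.intervalIntegrable _ _)
      hgE.stronglyMeasurable.stronglyMeasurableAtFilter hgE.continuousAt
  have GIcc : ∀ t ∈ Set.Icc a' T, G t = ∫ s in a'..t, g s := by
    intro t ht
    refine intervalIntegral.integral_congr fun s hs => ?_
    rw [Set.uIcc_of_le ht.1] at hs
    exact hgEeq s ⟨hs.1, hs.2.trans ht.2⟩
  -- continuity of the kernel
  have hker : ∀ t : ℝ, Continuous fun s : ℝ => (t - s) ^ (α - 1) := by
    intro t
    refine continuous_iff_continuousAt.2 fun x => ?_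
    exact (Real.continuousAt_rpow_const _ _ (Or.inr hα1.le)).comp
      ((continuous_const.sub continuous_id).continuousAt)
  have hfy : ContinuousOn (fun s => f s (y s)) (Set.Icc a T) := by
    refine hfcont.comp (continuousOn_id.prodMk hycont) fun s hs => ?_
    exact Set.mk_mem_prod hs (Set.mem_univ _)
  have hfy' : ContinuousOn (fun s => f s (y' s)) (Set.Icc a' T) := by
    refine hfcont.comp (continuousOn_id.prodMk hy'cont) fun s hs => ?_
    exact Set.mk_mem_prod (hsub1 hs) (Set.mem_univ _)
  -- key pointwise integral inequality
  have key : ∀ t ∈ Set.Icc a' T, g t ≤ ε + Kc * G t := by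
    intro t ht
    have hat : a ≤ t := ha'.trans ht.1
    have htA : t ∈ Set.Icc a T := ⟨hat, ht.2⟩
    have h1 : ContinuousOn (fun s => (t - s) ^ (α - 1) * f s (y s)) (Set.Icc a T) :=
      (hker t).continuousOn.mul hfy
    have h2 : ContinuousOn (fun s => (t - s) ^ (α - 1) * f s (y' s)) (Set.Icc a' T) :=
      (hker t).continuousOn.mul hfy'
    have h3 : ContinuousOn (fun s => (t - s) ^ (α - 1) * (f s (y s) - f s (y' s)))
        (Set.Icc a' T) := (hker t).continuousOn.mul ((hfy.mono hsub1).sub hfy')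
    have int1 : IntervalIntegrable (fun s => (t - s) ^ (α - 1) * f s (y s)) MeasureTheory.volume a a' :=
      (h1.mono (Set.Icc_subset_Icc le_rfl ha'T.le)).intervalIntegrable_of_Icc ha'
    have int2 : IntervalIntegrable (fun s => (t - s) ^ (α - 1) * f s (y s)) MeasureTheory.volume a' t :=
      (h1.mono (Set.Icc_subset_Icc ha' ht.2)).intervalIntegrable_of_Icc ht.1
    have int3 : IntervalIntegrable (fun s => (t - s) ^ (α - 1) * f s (y' s)) MeasureTheory.volume a' t :=
      (h2.mono (Set.Icc_subset_Icc le_rfl ht.2)).intervalIntegrable_of_Icc ht.1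
    have int4 : IntervalIntegrable (fun s => (t - s) ^ (α - 1) * (f s (y s) - f s (y' s)))
        MeasureTheory.volume a' t :=
      (h3.mono (Set.Icc_subset_Icc le_rfl ht.2)).intervalIntegrable_of_Icc ht.1
    have split : (∫ s in a..a', (t - s) ^ (α - 1) * f s (y s))
        + (∫ s in a'..t, (t - s) ^ (α - 1) * f s (y s))
        = ∫ s in a..t, (t - s) ^ (α - 1) * f s (y s) :=
      intervalIntegral.integral_add_adjacent_intervals int1 int2
    have hsubint : (∫ s in a'..t, (t - s) ^ (α - 1) * f s (y s))
        - (∫ s in a'..t, (t - s) ^ (α - 1) * f s (y' s))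
        = ∫ s in a'..t, (t - s) ^ (α - 1) * (f s (y s) - f s (y' s)) := by
      rw [← intervalIntegral.integral_sub int2 int3]
      refine intervalIntegral.integral_congr fun s _ => ?_
      ring
    have e : y t - y' t =
        ((∑ k ∈ Finset.range ⌈α⌉₊, yk k / (Nat.factorial k) * (t - a) ^ k)
          - ∑ k ∈ Finset.range ⌈α⌉₊, yk k / (Nat.factorial k) * (t - a') ^ k)
        + (D * (∫ s in a..a', (t - s) ^ (α - 1) * f s (y s))
          + D * (∫ s in a'..t, (t - s) ^ (α - 1) * (f s (y s) - f s (y' s)))) := by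
      rw [hy t htA, hy' t ht, ← split, ← hsubint, hDdef]
      ring
    -- bound the polynomial part
    have boundA : |(∑ k ∈ Finset.range ⌈α⌉₊, yk k / (Nat.factorial k) * (t - a) ^ k)
        - ∑ k ∈ Finset.range ⌈α⌉₊, yk k / (Nat.factorial k) * (t - a') ^ k|
        ≤ S * (a' - a) := by
      rw [← Finset.sum_sub_distrib, hSdef, Finset.sum_mul]
      refine (Finset.abs_sum_le_sum_abs _ _).trans (Finset.sum_le_sum fun k _ => ?_)
      have hxy : (t - a) ^ k - (t - a') ^ k = ((t - a) ^ k - (t - a') ^ k) := rfl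
      have haux := stmt12_pow_aux R (t - a) (t - a') (sub_nonneg.2 ht.1)
        (by linarith) (by rw [hRdef]; linarith [ht.2]) k
      have hfact : (0:ℝ) < (Nat.factorial k : ℝ) := by positivity
      calc |yk k / (Nat.factorial k) * (t - a) ^ k - yk k / (Nat.factorial k) * (t - a') ^ k|
          = |yk k| / (Nat.factorial k : ℝ) * |(t - a) ^ k - (t - a') ^ k| := by
            rw [← mul_sub, abs_mul, abs_div, abs_of_pos hfact]
        _ ≤ |yk k| / (Nat.factorial k : ℝ) * ((k : ℝ) * R ^ (k - 1) * ((t - a) - (t - a'))) := by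
            refine mul_le_mul_of_nonneg_left ?_ (by positivity)
            simpa using haux
        _ = |yk k| / (Nat.factorial k : ℝ) * ((k : ℝ) * R ^ (k - 1)) * (a' - a) := by ring
    -- bound I₁
    have boundI₁ : |∫ s in a..a', (t - s) ^ (α - 1) * f s (y s)|
        ≤ M * R ^ (α - 1) * (a' - a) := by
      refine (intervalIntegral.abs_integral_le_integral_abs ha').trans ?_
      have hmono : (∫ s in a..a', |(t - s) ^ (α - 1) * f s (y s)|)
          ≤ ∫ _s in a..a', M * R ^ (α - 1) := by
        refine intervalIntegral.integral_mono_on ha' int1.abs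
          (intervalIntegrable_const) fun s hs => ?_
        have hts : 0 ≤ t - s := by linarith [hs.2, ht.1]
        have hrp : (t - s) ^ (α - 1) ≤ R ^ (α - 1) := by
          refine Real.rpow_le_rpow hts ?_ hα1.le
          rw [hRdef]; linarith [hs.1, ht.2]
        rw [abs_mul, abs_of_nonneg (Real.rpow_nonneg hts _)]
        calc (t - s) ^ (α - 1) * |f s (y s)| ≤ R ^ (α - 1) * M :=
              mul_le_mul hrp (hfbdd s ⟨hs.1, hs.2.trans ha'T.le⟩ _) (abs_nonneg _) hRa
          _ = M * R ^ (α - 1) := by ring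
      refine hmono.trans ?_
      rw [intervalIntegral.integral_const, smul_eq_mul]
      ring_nf
      exact le_refl _
    -- bound I₂
    have boundI₂ : |∫ s in a'..t, (t - s) ^ (α - 1) * (f s (y s) - f s (y' s))|
        ≤ R ^ (α - 1) * L * ∫ s in a'..t, g s := by
      refine (intervalIntegral.abs_integral_le_integral_abs ht.1).trans ?_
      have hgint : IntervalIntegrable g MeasureTheory.volume a' t :=
        (hgcont.mono (Set.Icc_subset_Icc le_rfl ht.2)).intervalIntegrable_of_Icc ht.1
      have hmono : (∫ s in a'..t, |(t - s) ^ (α - 1) * (f s (y s) - f s (y' s))|)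
          ≤ ∫ s in a'..t, R ^ (α - 1) * L * g s := by
        refine intervalIntegral.integral_mono_on ht.1 int4.abs
          ((hgint.const_mul _)) fun s hs => ?_
        have hts : 0 ≤ t - s := by linarith [hs.2]
        have hrp : (t - s) ^ (α - 1) ≤ R ^ (α - 1) := by
          refine Real.rpow_le_rpow hts ?_ hα1.le
          rw [hRdef]; linarith [hs.1, ht.2]
        rw [abs_mul, abs_of_nonneg (Real.rpow_nonneg hts _)]
        have hlip : |f s (y s) - f s (y' s)| ≤ L * g s :=
          hflip s ⟨ha'.trans hs.1, hs.2.trans ht.2⟩ (y s) (y' s)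
        calc (t - s) ^ (α - 1) * |f s (y s) - f s (y' s)|
            ≤ R ^ (α - 1) * (L * g s) :=
              mul_le_mul hrp hlip (abs_nonneg _) hRa
          _ = R ^ (α - 1) * L * g s := by ring
      refine hmono.trans ?_
      rw [intervalIntegral.integral_const_mul]
    have habs : |y t - y' t| ≤ S * (a' - a) + (D * (M * R ^ (α - 1) * (a' - a))
        + D * (R ^ (α - 1) * L * ∫ s in a'..t, g s)) := by
      rw [e]
      refine (abs_add_le _ _).trans ?_
      gcongr
      refine (abs_add_le _ _).trans ?_
      rw [abs_mul, abs_mul, abs_of_pos hD]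
      gcongr
    rw [hgdef]
    have hGt : G t = ∫ s in a'..t, g s := GIcc t ht
    rw [hεdef, hKcdef, hGt]
    calc |y t - y' t| ≤ S * (a' - a) + (D * (M * R ^ (α - 1) * (a' - a))
        + D * (R ^ (α - 1) * L * ∫ s in a'..t, g s)) := habs
      _ = (S + M * R ^ (α - 1) * D) * (a' - a)
          + L * R ^ (α - 1) * D * ∫ s in a'..t, g s := by ring
  -- Gronwall
  have hGron : ∀ t ∈ Set.Icc a' T, ‖G t‖ ≤ gronwallBound 0 Kc ε (t - a') := by
    refine norm_le_gronwallBound_of_norm_deriv_right_le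
      (fun u _ => (hGderiv u).continuousAt.continuousWithinAt)
      (fun u _ => (hGderiv u).hasDerivWithinAt) ?_ ?_
    · simp [hGdef, intervalIntegral.integral_same]
    · intro u hu
      have hu' : u ∈ Set.Icc a' T := Set.Ico_subset_Icc_self hu
      have hk := key u hu'
      rw [Real.norm_eq_abs, Real.norm_eq_abs, hgEeq u hu']
      have hg0 : 0 ≤ g u := abs_nonneg _
      rw [abs_of_nonneg hg0]
      have : Kc * G u ≤ Kc * |G u| := mul_le_mul_of_nonneg_left (le_abs_self _) hKc
      linarith
  intro t ht
  have hk := key t ht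
  have hGb := hGron t ht
  rw [Real.norm_eq_abs] at hGb
  have hx0 : 0 ≤ t - a' := sub_nonneg.2 ht.1
  have hxR : t - a' ≤ R := by rw [hRdef]; linarith [ht.2]
  have hfin : ε + Kc * gronwallBound 0 Kc ε (t - a') ≤ ε * Real.exp (Kc * R) := by
    rcases eq_or_ne Kc 0 with h0 | h0
    · rw [h0, gronwallBound_K0]
      have h1 : (1:ℝ) ≤ Real.exp (0 * R) := by simp
      nlinarith
    · rw [gronwallBound_of_K_ne_0 h0]
      have hKpos : 0 < Kc := lt_of_le_of_ne hKc (Ne.symm h0)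
      have hexp : Real.exp (Kc * (t - a')) ≤ Real.exp (Kc * R) :=
        Real.exp_le_exp.2 (mul_le_mul_of_nonneg_left hxR hKc)
      have : ε + Kc * (0 * Real.exp (Kc * (t - a')) + ε / Kc * (Real.exp (Kc * (t - a')) - 1))
          = ε * Real.exp (Kc * (t - a')) := by
        field_simp
        ring
      rw [this]
      exact mul_le_mul_of_nonneg_left hexp hε
  have hdist : |a - a'| = a' - a := by rw [abs_sub_comm, abs_of_nonneg haa']
  have hKG : Kc * G t ≤ Kc * gronwallBound 0 Kc ε (t - a') :=
    mul_le_mul_of_nonneg_left ((le_abs_self _).trans hGb) hKc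
  calc |y t - y' t| = g t := rfl
    _ ≤ ε + Kc * G t := hk
    _ ≤ ε + Kc * gronwallBound 0 Kc ε (t - a') := by linarith
    _ ≤ ε * Real.exp (Kc * R) := hfin
    _ = C₁ * Real.exp (Kc * R) * |a - a'| := by rw [hdist, hεdef]; ring
end

section
/- Let 0 < α < 1, a < T ≤ T̃, M ≥ 0 and L ≥ 0. Let y, ỹ be continuous solutions on [a,T] and [a,T̃] of the Fredholm equations y(t) = y* + (1/Γ(α)) ∫_a^T G(t,s) f(s,y(s)) ds and ỹ(t) = y* + (1/Γ(α)) ∫_a^{T̃} G̃(t,s) f(s,ỹ(s)) ds, where G (resp. G̃) is the kernel with terminal point T (resp. T̃), and f is continuous, bounded by M and L-Lipschitz in the second variable. Then for all t ∈ [a,T], |y(t) - ỹ(t)| ≤ (2M/Γ(α+1)) (T̃ - T)^α + (L/Γ(α)) ∫_a^T |G(t,s)| |y(s) - ỹ(s)| ds. -/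
open MeasureTheory intervalIntegral Set

lemma aux_int {r : ℝ} (hr : -1 < r) (c a b : ℝ) :
    IntervalIntegrable (fun s => (c - s) ^ r) volume a b := by
  have h := (intervalIntegrable_rpow' (a := c - a) (b := c - b) hr).comp_sub_left c
  simpa using h

lemma aux_val {α : ℝ} (hα0 : 0 < α) (c a b : ℝ) :
    ∫ s in a..b, (c - s) ^ (α - 1) = ((c - a) ^ α - (c - b) ^ α) / α := by
  rw [intervalIntegral.integral_comp_sub_left (fun x => x ^ (α - 1)) c,
    integral_rpow (Or.inl (by linarith))]
  norm_num

theorem stmt16 (α a T T' y₀ M L : ℝ) (f : ℝ → ℝ → ℝ) (y y' : ℝ → ℝ)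
    (G G' : ℝ → ℝ → ℝ)
    (hα0 : 0 < α) (hα1 : α < 1) (h1 : a < T) (h2 : T ≤ T')
    (hM : 0 ≤ M) (hL : 0 ≤ L)
    (hG : ∀ t s, G t s =
      if s ≤ t then (t - s) ^ (α - 1) - (T - s) ^ (α - 1) else -(T - s) ^ (α - 1))
    (hG' : ∀ t s, G' t s =
      if s ≤ t then (t - s) ^ (α - 1) - (T' - s) ^ (α - 1) else -(T' - s) ^ (α - 1))
    (hfcont : ContinuousOn (fun p : ℝ × ℝ => f p.1 p.2) (Set.Icc a T' ×ˢ Set.univ))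
    (hfbdd : ∀ t ∈ Set.Icc a T', ∀ x : ℝ, |f t x| ≤ M)
    (hflip : ∀ t ∈ Set.Icc a T', ∀ x₁ x₂ : ℝ, |f t x₁ - f t x₂| ≤ L * |x₁ - x₂|)
    (hycont : ContinuousOn y (Set.Icc a T))
    (hy'cont : ContinuousOn y' (Set.Icc a T'))
    (hy : ∀ t ∈ Set.Icc a T,
      y t = y₀ + (1 / Real.Gamma α) * ∫ s in a..T, G t s * f s (y s))
    (hy' : ∀ t ∈ Set.Icc a T',
      y' t = y₀ + (1 / Real.Gamma α) * ∫ s in a..T', G' t s * f s (y' s)) :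
    ∀ t ∈ Set.Icc a T,
      |y t - y' t| ≤ (2 * M / Real.Gamma (α + 1)) * (T' - T) ^ α
        + (L / Real.Gamma α) * ∫ s in a..T, |G t s| * |y s - y' s| := by
  intro t ht
  obtain ⟨hat, htT⟩ := ht
  have haT : a ≤ T := h1.le
  have haT' : a ≤ T' := haT.trans h2
  have htT' : t ≤ T' := htT.trans h2
  have hΓ : 0 < Real.Gamma α := Real.Gamma_pos_of_pos hα0
  have hr : -1 < α - 1 := by linarith
  have hr0 : α - 1 ≠ 0 := by linarith
  have hrneg : α - 1 ≤ 0 := by linarith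
  -- continuity of the composed integrands
  have hcy : ContinuousOn (fun s => f s (y s)) (Set.Icc a T) :=
    hfcont.comp (continuousOn_id.prodMk hycont)
      (fun s hs => ⟨⟨hs.1, hs.2.trans h2⟩, trivial⟩)
  have hcy' : ContinuousOn (fun s => f s (y' s)) (Set.Icc a T') :=
    hfcont.comp (continuousOn_id.prodMk hy'cont) (fun s hs => ⟨hs, trivial⟩)
  -- integrability of the kernels
  have hGat : IntervalIntegrable (G t) volume a t := by
    rw [intervalIntegrable_iff_integrableOn_Ioc_of_le hat]
    refine (((aux_int hr t a t).sub (aux_int hr T a t)).1).congr_fun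
      (fun s hs => ?_) measurableSet_Ioc
    rw [hG t s, if_pos hs.2]
  have hGtT : IntervalIntegrable (G t) volume t T := by
    rw [intervalIntegrable_iff_integrableOn_Ioc_of_le htT]
    refine (((aux_int hr T t T).neg).1).congr_fun (fun s hs => ?_) measurableSet_Ioc
    simp [hG t s, if_neg (not_le.mpr hs.1)]
  have hGint : IntervalIntegrable (G t) volume a T := hGat.trans hGtT
  have hG'at : IntervalIntegrable (G' t) volume a t := by
    rw [intervalIntegrable_iff_integrableOn_Ioc_of_le hat]
    refine (((aux_int hr t a t).sub (aux_int hr T' a t)).1).congr_fun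
      (fun s hs => ?_) measurableSet_Ioc
    rw [hG' t s, if_pos hs.2]
  have hG'tT : IntervalIntegrable (G' t) volume t T := by
    rw [intervalIntegrable_iff_integrableOn_Ioc_of_le htT]
    refine (((aux_int hr T' t T).neg).1).congr_fun (fun s hs => ?_) measurableSet_Ioc
    simp [hG' t s, if_neg (not_le.mpr hs.1)]
  have hG'aT : IntervalIntegrable (G' t) volume a T := hG'at.trans hG'tT
  have hG'TT' : IntervalIntegrable (G' t) volume T T' := by
    rw [intervalIntegrable_iff_integrableOn_Ioc_of_le h2]
    refine (((aux_int hr T' T T').neg).1).congr_fun (fun s hs => ?_) measurableSet_Ioc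
    simp [hG' t s, if_neg (not_le.mpr (lt_of_le_of_lt htT hs.1))]
  -- integrability of the full integrands
  have huIccT : Set.uIcc a T = Set.Icc a T := Set.uIcc_of_le haT
  have huIccTT' : Set.uIcc T T' = Set.Icc T T' := Set.uIcc_of_le h2
  have hF1 : IntervalIntegrable (fun s => G t s * f s (y s)) volume a T :=
    hGint.mul_continuousOn (by rw [huIccT]; exact hcy)
  have hF2aT : IntervalIntegrable (fun s => G' t s * f s (y' s)) volume a T :=
    hG'aT.mul_continuousOn (by rw [huIccT]; exact hcy'.mono (Set.Icc_subset_Icc_right h2))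
  have hF2TT' : IntervalIntegrable (fun s => G' t s * f s (y' s)) volume T T' :=
    hG'TT'.mul_continuousOn (by rw [huIccTT']; exact hcy'.mono (Set.Icc_subset_Icc_left haT))
  -- the difference identity
  have ey := hy t ⟨hat, htT⟩
  have ey' := hy' t ⟨hat, htT'⟩
  have hsplit : (∫ s in a..T', G' t s * f s (y' s)) =
      (∫ s in a..T, G' t s * f s (y' s)) + ∫ s in T..T', G' t s * f s (y' s) :=
    (intervalIntegral.integral_add_adjacent_intervals hF2aT hF2TT').symm
  have hdiff : y t - y' t = (1 / Real.Gamma α) *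
      ((∫ s in a..T, (G t s * f s (y s) - G' t s * f s (y' s)))
        - ∫ s in T..T', G' t s * f s (y' s)) := by
    rw [ey, ey', hsplit, intervalIntegral.integral_sub hF1 hF2aT]
    ring
  -- bound on the main part
  set D : ℝ → ℝ := fun s => (T - s) ^ (α - 1) - (T' - s) ^ (α - 1) with hD
  set I : ℝ := ∫ s in a..T, |G t s| * |y s - y' s| with hI
  have hΔcont : ContinuousOn (fun s => |y s - y' s|) (Set.Icc a T) :=
    (hycont.sub (hy'cont.mono (Set.Icc_subset_Icc_right h2))).abs
  have hBL : IntervalIntegrable (fun s => L * (|G t s| * |y s - y' s|)) volume a T :=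
    (hGint.abs.mul_continuousOn (by rw [huIccT]; exact hΔcont)).const_mul L
  have hBD : IntervalIntegrable (fun s => M * D s) volume a T :=
    (((aux_int hr T a T).sub (aux_int hr T' a T)).const_mul M)
  have hB : IntervalIntegrable (fun s => L * (|G t s| * |y s - y' s|) + M * D s) volume a T :=
    hBL.add hBD
  have key1 : |∫ s in a..T, (G t s * f s (y s) - G' t s * f s (y' s))| ≤
      L * I + M * ∫ s in a..T, D s := by
    have h3 := intervalIntegral.abs_integral_le_integral_abs (μ := volume)
      (f := fun s => G t s * f s (y s) - G' t s * f s (y' s)) haT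
    refine h3.trans ?_
    have h4 : (∫ s in a..T, |G t s * f s (y s) - G' t s * f s (y' s)|) ≤
        ∫ s in a..T, (L * (|G t s| * |y s - y' s|) + M * D s) := by
      refine intervalIntegral.integral_mono_ae_restrict haT (hF1.sub hF2aT).abs hB ?_
      have h0 : ∀ᵐ s ∂(volume : Measure ℝ), s ≠ T := by
        rw [MeasureTheory.ae_iff]
        simpa using measure_singleton T
      filter_upwards [ae_restrict_of_ae h0, ae_restrict_mem measurableSet_Icc] with s hsne hs
      have hsT : s < T := lt_of_le_of_ne hs.2 hsne
      have hs' : s ∈ Set.Icc a T' := ⟨hs.1, hs.2.trans h2⟩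
      have hfy' : |f s (y' s)| ≤ M := hfbdd s hs' _
      have hlip : |f s (y s) - f s (y' s)| ≤ L * |y s - y' s| := hflip s hs' _ _
      have hGG' : G t s - G' t s = (T' - s) ^ (α - 1) - (T - s) ^ (α - 1) := by
        rw [hG t s, hG' t s]; split_ifs <;> ring
      have habs : |G t s - G' t s| = D s := by
        rw [hGG', abs_sub_comm, abs_of_nonneg]
        have : (T' - s) ^ (α - 1) ≤ (T - s) ^ (α - 1) :=
          Real.rpow_le_rpow_of_nonpos (by linarith) (by linarith) hrneg
        linarith
      calc |G t s * f s (y s) - G' t s * f s (y' s)|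
          = |G t s * (f s (y s) - f s (y' s)) + (G t s - G' t s) * f s (y' s)| := by
            ring_nf
        _ ≤ |G t s * (f s (y s) - f s (y' s))| + |(G t s - G' t s) * f s (y' s)| :=
            abs_add_le _ _
        _ = |G t s| * |f s (y s) - f s (y' s)| + |G t s - G' t s| * |f s (y' s)| := by
            rw [abs_mul, abs_mul]
        _ ≤ |G t s| * (L * |y s - y' s|) + D s * M := by
            refine add_le_add (mul_le_mul_of_nonneg_left hlip (abs_nonneg _)) ?_
            rw [habs]
            exact mul_le_mul_of_nonneg_left hfy'
              (habs ▸ abs_nonneg (G t s - G' t s))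
        _ ≤ L * (|G t s| * |y s - y' s|) + M * D s := by ring_nf; rfl
    refine h4.trans ?_
    rw [intervalIntegral.integral_add hBL hBD, intervalIntegral.integral_const_mul,
      intervalIntegral.integral_const_mul]
  -- bound on ∫ D
  have hDval : (∫ s in a..T, D s) ≤ (T' - T) ^ α / α := by
    have := intervalIntegral.integral_sub (aux_int hr T a T) (aux_int hr T' a T)
    rw [hD]
    rw [this, aux_val hα0 T a T, aux_val hα0 T' a T]
    rw [sub_self, Real.zero_rpow hα0.ne']
    have h5 : (T - a) ^ α ≤ (T' - a) ^ α :=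
      Real.rpow_le_rpow (by linarith) (by linarith) hα0.le
    rw [div_sub_div_same]
    have h7 : (T - a) ^ α - 0 - ((T' - a) ^ α - (T' - T) ^ α) ≤ (T' - T) ^ α := by linarith
    exact div_le_div_of_nonneg_right h7 hα0.le
  -- bound on the tail
  have key2 : |∫ s in T..T', G' t s * f s (y' s)| ≤ M * ((T' - T) ^ α / α) := by
    have h3 := intervalIntegral.abs_integral_le_integral_abs (μ := volume)
      (f := fun s => G' t s * f s (y' s)) h2
    refine h3.trans ?_
    have h4 : (∫ s in T..T', |G' t s * f s (y' s)|) ≤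
        ∫ s in T..T', M * (T' - s) ^ (α - 1) := by
      refine intervalIntegral.integral_mono_on h2 hF2TT'.abs
        ((aux_int hr T' T T').const_mul M) (fun s hs => ?_)
      have hGval : |G' t s| = (T' - s) ^ (α - 1) := by
        rw [hG' t s]
        have hnn : (0:ℝ) ≤ (T' - s) ^ (α - 1) := Real.rpow_nonneg (by linarith [hs.2]) _
        split_ifs with h
        · have hts : t = s := le_antisymm (le_trans htT hs.1) h
          rw [hts, sub_self, Real.zero_rpow hr0, zero_sub, abs_neg, abs_of_nonneg hnn]
        · rw [abs_neg, abs_of_nonneg hnn]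
      rw [abs_mul, hGval]
      calc (T' - s) ^ (α - 1) * |f s (y' s)| ≤ (T' - s) ^ (α - 1) * M := by
            exact mul_le_mul_of_nonneg_left (hfbdd s ⟨haT.trans hs.1, hs.2⟩ _)
              (Real.rpow_nonneg (by linarith [hs.2]) _)
        _ = M * (T' - s) ^ (α - 1) := mul_comm _ _
    refine h4.trans ?_
    rw [intervalIntegral.integral_const_mul, aux_val hα0 T' T T', sub_self,
      Real.zero_rpow hα0.ne', sub_zero]
  -- assemble
  have hGamma1 : Real.Gamma (α + 1) = α * Real.Gamma α := Real.Gamma_add_one hα0.ne'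
  have hIge : 0 ≤ (T' - T) ^ α := Real.rpow_nonneg (by linarith) _
  rw [hdiff, abs_mul, abs_of_nonneg (by positivity : (0:ℝ) ≤ 1 / Real.Gamma α)]
  have habs2 : |(∫ s in a..T, (G t s * f s (y s) - G' t s * f s (y' s)))
      - ∫ s in T..T', G' t s * f s (y' s)| ≤
      (L * I + M * ∫ s in a..T, D s) + M * ((T' - T) ^ α / α) :=
    (abs_sub _ _).trans (add_le_add key1 key2)
  have hfin : 1 / Real.Gamma α * ((L * I + M * ∫ s in a..T, D s) + M * ((T' - T) ^ α / α)) ≤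
      (2 * M / Real.Gamma (α + 1)) * (T' - T) ^ α + (L / Real.Gamma α) * I := by
    rw [hGamma1]
    have hDI : M * (∫ s in a..T, D s) ≤ M * ((T' - T) ^ α / α) :=
      mul_le_mul_of_nonneg_left hDval hM
    have : 1 / Real.Gamma α * ((L * I + M * ∫ s in a..T, D s) + M * ((T' - T) ^ α / α)) ≤
        1 / Real.Gamma α * ((L * I + M * ((T' - T) ^ α / α)) + M * ((T' - T) ^ α / α)) := by
      refine mul_le_mul_of_nonneg_left (by linarith) (by positivity)
    refine this.trans (le_of_eq ?_)
    field_simp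
    ring
  exact le_trans (mul_le_mul_of_nonneg_left habs2 (by positivity)) hfin
end

section
/- Let 0 < α < 1, a ≤ ã < T. With G(t,s) the Fredholm kernel with terminal point T, for every t ∈ [ã, T] one has (1/Γ(α)) ∫_a^{ã} |G(t,s)| ds = (1/Γ(α+1)) [(t-a)^α - (t-ã)^α - (T-a)^α + (T-ã)^α] ≤ (2/Γ(α+1)) |a - ã|^α. -/
open MeasureTheory Set

lemma sub_rpow_le_rpow_sub' {x y p : ℝ} (hy : 0 ≤ y) (hyx : y ≤ x)
    (hp0 : 0 ≤ p) (hp1 : p ≤ 1) : x ^ p - y ^ p ≤ (x - y) ^ p := by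
  have hxy : 0 ≤ x - y := by linarith
  have hx : 0 ≤ x := by linarith
  have h := NNReal.rpow_add_le_add_rpow (x - y).toNNReal y.toNNReal hp0 hp1
  have hsum : ((x - y).toNNReal + y.toNNReal : NNReal) = x.toNNReal := by
    rw [← Real.toNNReal_add hxy hy]; ring_nf
  rw [hsum] at h
  have h' := NNReal.coe_le_coe.mpr h
  simp only [NNReal.coe_rpow, NNReal.coe_add, Real.coe_toNNReal _ hx,
    Real.coe_toNNReal _ hxy, Real.coe_toNNReal _ hy] at h'
  linarith

theorem stmt17 (α a a' T : ℝ) (hα0 : 0 < α) (hα1 : α < 1)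
    (h1 : a ≤ a') (h2 : a' < T) (G : ℝ → ℝ → ℝ)
    (hG : ∀ t s, G t s =
      if s ≤ t then (t - s) ^ (α - 1) - (T - s) ^ (α - 1) else -(T - s) ^ (α - 1)) :
    ∀ t ∈ Set.Icc a' T,
      (1 / Real.Gamma α) * (∫ s in a..a', |G t s|)
          = (1 / Real.Gamma (α + 1))
              * ((t - a) ^ α - (t - a') ^ α - (T - a) ^ α + (T - a') ^ α) ∧
      (1 / Real.Gamma (α + 1))
          * ((t - a) ^ α - (t - a') ^ α - (T - a) ^ α + (T - a') ^ α)
        ≤ (2 / Real.Gamma (α + 1)) * |a - a'| ^ α := by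
  intro t ht
  obtain ⟨ht1, ht2⟩ := ht
  have hα1' : α - 1 < 0 := by linarith
  have hΓα : 0 < Real.Gamma α := Real.Gamma_pos_of_pos hα0
  have hΓ1 : Real.Gamma (α + 1) = α * Real.Gamma α := Real.Gamma_add_one (ne_of_gt hα0)
  have hΓpos : 0 < Real.Gamma (α + 1) := by rw [hΓ1]; positivity
  have hi1 : IntervalIntegrable (fun s => (t - s) ^ (α - 1)) volume a a' := by
    have := (intervalIntegral.intervalIntegrable_rpow' (a := t - a) (b := t - a')
      (by linarith : (-1 : ℝ) < α - 1)).comp_sub_left t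
    simpa using this
  have hi2 : IntervalIntegrable (fun s => (T - s) ^ (α - 1)) volume a a' := by
    have := (intervalIntegral.intervalIntegrable_rpow' (a := T - a) (b := T - a')
      (by linarith : (-1 : ℝ) < α - 1)).comp_sub_left T
    simpa using this
  have habs : (∫ s in a..a', |G t s|)
      = ∫ s in a..a', ((t - s) ^ (α - 1) - (T - s) ^ (α - 1)) := by
    apply intervalIntegral.integral_congr_ae
    have hne : ∀ᵐ (s : ℝ), s ≠ t := by
      rw [ae_iff]
      simp only [not_not, setOf_eq_eq_singleton]
      exact measure_singleton t
    filter_upwards [hne] with s hs hmem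
    rw [Set.uIoc_of_le h1] at hmem
    have hst' : s ≤ t := le_trans hmem.2 ht1
    have hst : s < t := lt_of_le_of_ne hst' hs
    rw [hG, if_pos hst']
    have hpos : (0 : ℝ) < t - s := by linarith
    have hle : t - s ≤ T - s := by linarith
    have := Real.rpow_le_rpow_of_nonpos hpos hle (le_of_lt hα1')
    rw [abs_of_nonneg (sub_nonneg.mpr this)]
  have hI1 : (∫ s in a..a', (t - s) ^ (α - 1))
      = ((t - a) ^ α - (t - a') ^ α) / α := by
    rw [intervalIntegral.integral_comp_sub_left (fun x => x ^ (α - 1)) t,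
      integral_rpow (Or.inl (by linarith : (-1 : ℝ) < α - 1))]
    rw [show α - 1 + 1 = α by ring]
  have hI2 : (∫ s in a..a', (T - s) ^ (α - 1))
      = ((T - a) ^ α - (T - a') ^ α) / α := by
    rw [intervalIntegral.integral_comp_sub_left (fun x => x ^ (α - 1)) T,
      integral_rpow (Or.inl (by linarith : (-1 : ℝ) < α - 1))]
    rw [show α - 1 + 1 = α by ring]
  constructor
  · rw [habs, intervalIntegral.integral_sub hi1 hi2, hI1, hI2, hΓ1]
    field_simp
    ring
  · have key : (t - a) ^ α - (t - a') ^ α ≤ (a' - a) ^ α := by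
      have h := sub_rpow_le_rpow_sub' (x := t - a) (y := t - a')
        (by linarith) (by linarith) hα0.le hα1.le
      have e : (t - a) - (t - a') = a' - a := by ring
      rwa [e] at h
    have key2 : (T - a') ^ α ≤ (T - a) ^ α :=
      Real.rpow_le_rpow (by linarith) (by linarith) hα0.le
    have habs' : |a - a'| = a' - a := by
      rw [abs_sub_comm, abs_of_nonneg (by linarith)]
    rw [habs']
    have hnn : 0 ≤ (a' - a) ^ α := Real.rpow_nonneg (by linarith) _
    have hb : (t - a) ^ α - (t - a') ^ α - (T - a) ^ α + (T - a') ^ α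
        ≤ 2 * (a' - a) ^ α := by linarith
    calc (1 / Real.Gamma (α + 1))
          * ((t - a) ^ α - (t - a') ^ α - (T - a) ^ α + (T - a') ^ α)
        ≤ (1 / Real.Gamma (α + 1)) * (2 * (a' - a) ^ α) :=
          mul_le_mul_of_nonneg_left hb (by positivity)
      _ = (2 / Real.Gamma (α + 1)) * (a' - a) ^ α := by ring
end
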